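/- arXiv:0704.0010 — 4 statements merged into one kernel-verified Lean document; each statement's English description precedes it below -/
import Mathlib

section
/- A connected graph G is bipartite if and only if Djoković's relation θ and Winkler's relation Θ coincide on the edge set of G. -/
/-!
In a bipartite graph no vertex is equidistant from the two ends of an edge `xy`, so
`d(w, x) - d(w, y) = ±1` for every `w`; both `xy θ uv` and `xy Θ uv` then say that this sign
differs at `u` and at `v`. In a connected non-bipartite graph the parity of `d(·, r)` is not a
colouring, so some edge `uv` has ends equidistant from `r`. Along a geodesic from `r` to `u` the
quantity `d(w, u) - d(w, v)` goes from `0` to `-1` and never increases; at the edge `xy` where it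
drops, `xy Θ uv` holds, while `v` lies in neither semicube, so `xy θ uv` fails.
-/

/-- The semicube `W_ab` of a graph: the set of vertices closer to `a` than to `b`. -/
def semicube {V : Type} (G : SimpleGraph V) (a b : V) : Set V :=
  {w | G.dist w a < G.dist w b}

namespace SimpleGraph

variable {V : Type} {G : SimpleGraph V} {r u v w x y : V}

/-- Djoković's relation `θ`: `xy θ uv`. -/
def DjokovicRel (G : SimpleGraph V) (x y u v : V) : Prop :=
  (u ∈ semicube G x y ∧ v ∈ semicube G y x) ∨ (v ∈ semicube G x y ∧ u ∈ semicube G y x)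

/-- Winkler's relation `Θ`: `xy Θ uv`. -/
def WinklerRel (G : SimpleGraph V) (x y u v : V) : Prop :=
  G.dist x u + G.dist y v ≠ G.dist x v + G.dist y u

theorem mem_semicube_iff : w ∈ semicube G x y ↔ G.dist x w < G.dist y w := by
  rw [semicube, Set.mem_ofPred_eq, dist_comm, dist_comm (u := w)]

theorem Adj.dist_le_dist_add_one (h : G.Adj x y) (w : V) : G.dist w x ≤ G.dist w y + 1 := by
  rcases h.symm.diff_dist_adj (u := w) with h' | h' | h' <;> omega

theorem Adj.dist_le_dist_add_one' (h : G.Adj x y) (w : V) : G.dist x w ≤ G.dist y w + 1 := by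
  simpa only [dist_comm] using h.dist_le_dist_add_one w

theorem Colorable.dist_ne_of_adj (hc : G.Colorable 2) (hxw : G.Reachable x w) (hxy : G.Adj x y) :
    G.dist x w ≠ G.dist y w := by
  let c : G.Coloring Bool := G.recolorOfEquiv finTwoEquiv hc.some
  obtain ⟨p, hp⟩ := hxw.exists_walk_length_eq_dist
  obtain ⟨q, hq⟩ := (hxy.symm.reachable.trans hxw).exists_walk_length_eq_dist
  have hx := c.even_length_iff_congr p
  have hy := c.even_length_iff_congr q
  have hcxy := c.valid hxy
  intro h
  -- geodesics of equal length from `x` and `y` to `w` force `c x = c y`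
  rw [hp, h, ← hq, hy] at hx
  revert hx hcxy
  cases c x <;> cases c y <;> cases c w <;> decide

theorem colorable_two_of_forall_adj_dist_ne (h : ∀ x y, G.Adj x y → G.dist x r ≠ G.dist y r) :
    G.Colorable 2 := by
  let c : G.Coloring Bool := Coloring.mk (fun w ↦ decide (Even (G.dist w r))) fun {x y} hxy ↦ by
    have := h x y hxy
    have := hxy.dist_le_dist_add_one' r
    have := hxy.symm.dist_le_dist_add_one' r
    rcases (by omega : G.dist x r = G.dist y r + 1 ∨ G.dist y r = G.dist x r + 1) with e | e <;>
      simp only [e, Nat.even_add_one, ne_eq, decide_eq_decide] <;> tauto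
  exact ⟨G.recolorOfEquiv finTwoEquiv.symm c⟩

theorem djokovicRel_iff_winklerRel_of_dist_ne (hxy : G.Adj x y) (hu : G.dist x u ≠ G.dist y u)
    (hv : G.dist x v ≠ G.dist y v) : G.DjokovicRel x y u v ↔ G.WinklerRel x y u v := by
  have := hxy.dist_le_dist_add_one' u
  have := hxy.symm.dist_le_dist_add_one' u
  have := hxy.dist_le_dist_add_one' v
  have := hxy.symm.dist_le_dist_add_one' v
  simp only [DjokovicRel, WinklerRel, mem_semicube_iff]
  omega

theorem not_djokovicRel_of_dist_eq (hv : G.dist x v = G.dist y v) : ¬ G.DjokovicRel x y u v := by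
  simp only [DjokovicRel, mem_semicube_iff]
  omega

theorem exists_adj_dist_eq_add_one_of_dist_eq (huv : G.Adj u v) (hwu : G.Reachable w u)
    (hw : G.dist w u = G.dist w v) :
    ∃ x y, G.Adj x y ∧ G.dist x u = G.dist y u + 1 ∧ G.dist x v = G.dist y v := by
  induction hn : G.dist w u generalizing w with
  | zero =>
    rw [hwu.dist_eq_zero_iff] at hn
    subst hn
    exact absurd hw (by rw [dist_self, dist_eq_one_iff_adj.mpr huv]; decide)
  | succ n ih =>
    obtain ⟨p, hp⟩ := hwu.exists_walk_length_eq_dist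
    cases p with
    | nil => simp at hn
    | @cons _ w₁ _ hww₁ q =>
      rw [Walk.length_cons] at hp
      have := dist_le q
      have := hww₁.dist_le_dist_add_one' u
      have := hww₁.symm.dist_le_dist_add_one' u
      have := hww₁.dist_le_dist_add_one' v
      have := hww₁.symm.dist_le_dist_add_one' v
      have := huv.symm.dist_le_dist_add_one w₁
      by_cases hw₁ : G.dist w₁ u = G.dist w₁ v
      · exact ih q.reachable hw₁ (by omega)
      · exact ⟨w, w₁, hww₁, by omega, by omega⟩

theorem Connected.exists_winklerRel_not_djokovicRel_of_not_colorable (hG : G.Connected)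
    (h : ¬ G.Colorable 2) :
    ∃ x y u v, G.Adj x y ∧ G.Adj u v ∧ G.WinklerRel x y u v ∧ ¬ G.DjokovicRel x y u v := by
  obtain ⟨r⟩ := hG.nonempty
  obtain ⟨u, v, huv, hr⟩ : ∃ u v, G.Adj u v ∧ G.dist u r = G.dist v r := by
    by_contra! hne
    exact h (colorable_two_of_forall_adj_dist_ne hne)
  rw [dist_comm, dist_comm (u := v)] at hr
  obtain ⟨x, y, hxy, hu, hv⟩ := exists_adj_dist_eq_add_one_of_dist_eq huv (hG r u) hr
  refine ⟨x, y, u, v, hxy, huv, ?_, not_djokovicRel_of_dist_eq hv⟩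
  rw [WinklerRel]
  omega

end SimpleGraph

open SimpleGraph

/-- A connected graph is bipartite if and only if Djoković's relation `θ` and
Winkler's relation `Θ` coincide on its edge set. -/
theorem bipartite_iff_theta_eq_Theta {V : Type} (G : SimpleGraph V)
    (hconn : G.Connected) :
    G.Colorable 2 ↔
      ∀ x y u v : V, G.Adj x y → G.Adj u v →
        (((u ∈ semicube G x y ∧ v ∈ semicube G y x) ∨
          (v ∈ semicube G x y ∧ u ∈ semicube G y x)) ↔
         G.dist x u + G.dist y v ≠ G.dist x v + G.dist y u) := by
  constructor
  · intro hc x y u v hxy _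
    exact djokovicRel_iff_winklerRel_of_dist_ne hxy (hc.dist_ne_of_adj (hconn x u) hxy)
      (hc.dist_ne_of_adj (hconn x v) hxy)
  · intro h
    by_contra hc
    obtain ⟨x, y, u, v, hxy, huv, hW, hD⟩ :=
      hconn.exists_winklerRel_not_djokovicRel_of_not_colorable hc
    exact hD ((h x y u v hxy huv).2 hW)
end

section
/- A connected graph G is a partial cube if and only if G is bipartite and all semicubes of G are convex. -/
open scoped symmDiff

/-- A set of vertices is convex if it contains every vertex lying on a shortest
path between two of its members. -/
def GraphConvex {V : Type} (G : SimpleGraph V) (S : Set V) : Prop :=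
  ∀ u ∈ S, ∀ v ∈ S, ∀ w : V, G.dist u w + G.dist w v = G.dist u v → w ∈ S

/-- A partial cube is a connected graph which embeds isometrically into a
hypercube `H(X)` (vertices: the finite subsets of `X`; distance: the Hamming
distance, i.e. the cardinality of the symmetric difference). -/
def IsPartialCube {V : Type} (G : SimpleGraph V) : Prop :=
  G.Connected ∧ ∃ (X : Type) (f : V → Set X),
    (∀ u, (f u).Finite) ∧ ∀ u v : V, (f u ∆ f v).ncard = G.dist u v


/-! Forward direction: if `f` embeds `G` isometrically into a hypercube and `f a ∆ f b = {x}`,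
then `W_ab` is the set of vertices agreeing with `a` in the coordinate `x`, and a vertex on a
geodesic between `u` and `v` agrees with them in every coordinate where they agree.

Backward direction (Djoković): in a connected bipartite graph `W_ab` and `W_ba` partition the
vertices, and convexity forces `W_ab = W_xy` for every edge `xy` with `x ∈ W_ab`, `y ∈ W_ba`.
Walking along a geodesic from `u` to `v`, each edge `ux` therefore contributes exactly one new
semicube containing `u` but not `v`, namely `W_ux`, so there are `d(u, v)` of them. Orienting
every semicube away from a base vertex `z` gives the embedding `w ↦ {S | w ∈ S, z ∉ S}`. -/

namespace Set

variable {α : Type*} {s t u : Set α}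

theorem ncard_add_ncard_eq_ncard_symmDiff_add (hs : s.Finite) (ht : t.Finite) :
    s.ncard + t.ncard = (s ∆ t).ncard + 2 * (s ∩ t).ncard := by
  have hunion : (s ∆ t).ncard + (s ∩ t).ncard = (s ∪ t).ncard :=
    (ncard_union_eq (disjoint_symmDiff_inf s t) (hs.symmDiff ht) (hs.inter_of_left t)).symm.trans
      (congrArg ncard (symmDiff_sup_inf s t))
  have := ncard_union_add_ncard_inter s t hs ht
  omega

theorem disjoint_symmDiff_of_ncard_symmDiff_eq_add (hs : s.Finite) (ht : t.Finite)
    (hu : u.Finite) (h : (s ∆ u).ncard = (s ∆ t).ncard + (t ∆ u).ncard) :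
    Disjoint (s ∆ t) (t ∆ u) := by
  have hcard := ncard_add_ncard_eq_ncard_symmDiff_add (hs.symmDiff ht) (ht.symmDiff hu)
  rw [symmDiff_assoc, symmDiff_symmDiff_cancel_left] at hcard
  rw [disjoint_iff_inter_eq_empty, ← ncard_eq_zero ((hs.symmDiff ht).inter_of_left _)]
  omega

theorem ncard_lt_ncard_symmDiff_singleton_iff (hs : s.Finite) (x : α) :
    s.ncard < (s ∆ {x}).ncard ↔ x ∉ s := by
  have hcard := ncard_add_ncard_eq_ncard_symmDiff_add hs (finite_singleton x)
  have hle : (s ∩ {x}).ncard ≤ 1 :=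
    (ncard_le_ncard inter_subset_right).trans (ncard_singleton x).le
  rw [ncard_singleton] at hcard
  rw [← inter_singleton_eq_empty, ← ncard_eq_zero (hs.inter_of_left _)]
  omega

/-- Sending `S` to whichever of `S`, `Sᶜ` avoids `z` is a bijection onto the left-hand side. -/
theorem ncard_symmDiff_separating_eq {𝒮 : Set (Set α)} (h𝒮 : ∀ S ∈ 𝒮, Sᶜ ∈ 𝒮)
    (u v z : α) :
    ({S ∈ 𝒮 | u ∈ S ∧ z ∉ S} ∆ {S ∈ 𝒮 | v ∈ S ∧ z ∉ S}).ncard =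
      {S ∈ 𝒮 | u ∈ S ∧ v ∉ S}.ncard := by
  classical
  refine (ncard_congr (fun S _ => if z ∈ S then Sᶜ else S) ?_ ?_ ?_).symm
  · rintro S ⟨hS, huS, hvS⟩
    by_cases hz : z ∈ S <;> simp [mem_symmDiff, hz, hS, huS, hvS, h𝒮 S hS]
  · rintro S T ⟨-, huS, -⟩ ⟨-, huT, -⟩ h
    by_cases hzS : z ∈ S <;> by_cases hzT : z ∈ T <;>
      simp only [hzS, hzT, if_true, if_false] at h
    · exact compl_inj_iff.mp h
    · subst h
      exact (huT huS).elim
    · subst h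
      exact (huS huT).elim
    · exact h
  · rintro R (⟨⟨hR, huR, hzR⟩, hvR⟩ | ⟨⟨hR, hvR, hzR⟩, huR⟩)
    · exact ⟨R, ⟨hR, huR, fun hv => hvR ⟨hR, hv, hzR⟩⟩, if_neg hzR⟩
    · refine ⟨Rᶜ, ⟨h𝒮 R hR, fun hu => huR ⟨hR, hu, hzR⟩, not_not.mpr hvR⟩, ?_⟩
      rw [if_pos (mem_compl hzR), compl_compl]

end Set

section Hypercube

variable {V X : Type} {G : SimpleGraph V} {f : V → Set X}

theorem colorable_two_of_isometry (hfin : ∀ v, (f v).Finite)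
    (hf : ∀ u v, (f u ∆ f v).ncard = G.dist u v) : G.Colorable 2 := by
  refine (SimpleGraph.Coloring.mk (fun v => decide (Even (f v).ncard)) ?_).colorable
  intro a b hab
  have hcard := Set.ncard_add_ncard_eq_ncard_symmDiff_add (hfin a) (hfin b)
  rw [hf, SimpleGraph.dist_eq_one_iff_adj.mpr hab] at hcard
  have hodd : ¬ Even ((f a).ncard + (f b).ncard) := by
    rw [hcard, add_comm, Nat.even_add_one, not_not]
    exact even_two_mul _
  rw [Nat.even_add] at hodd
  simpa using hodd

theorem semicube_eq_of_isometry (hfin : ∀ v, (f v).Finite)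
    (hf : ∀ u v, (f u ∆ f v).ncard = G.dist u v) {a b : V} {x : X} (hx : f a ∆ f b = {x}) :
    semicube G a b = {w | x ∉ f w ∆ f a} := by
  ext w
  have hwb : f w ∆ f b = (f w ∆ f a) ∆ {x} := by
    rw [← hx, symmDiff_assoc, symmDiff_symmDiff_cancel_left]
  rw [semicube, Set.mem_ofPred_eq, ← hf, ← hf, hwb,
    Set.ncard_lt_ncard_symmDiff_singleton_iff ((hfin w).symmDiff (hfin a))]
  rfl

theorem graphConvex_semicube_of_isometry (hfin : ∀ v, (f v).Finite)
    (hf : ∀ u v, (f u ∆ f v).ncard = G.dist u v) {a b : V} (hab : G.Adj a b) :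
    GraphConvex G (semicube G a b) := by
  obtain ⟨x, hx⟩ :=
    Set.ncard_eq_one.mp <| (hf a b).trans (SimpleGraph.dist_eq_one_iff_adj.mpr hab)
  rw [semicube_eq_of_isometry hfin hf hx]
  intro u hu v hv w hw hwx
  have hdisj : Disjoint (f u ∆ f w) (f w ∆ f v) :=
    Set.disjoint_symmDiff_of_ncard_symmDiff_eq_add (hfin u) (hfin w) (hfin v)
      (by rw [hf, hf, hf, hw])
  simp only [Set.mem_ofPred_eq, Set.mem_symmDiff] at hu hv hwx
  exact Set.disjoint_left.mp hdisj (show x ∈ f u ∆ f w by rw [Set.mem_symmDiff]; tauto)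
    (show x ∈ f w ∆ f v by rw [Set.mem_symmDiff]; tauto)

end Hypercube

section Djokovic

variable {V : Type} {G : SimpleGraph V} {a b w x y : V}

theorem dist_ne_dist_of_adj (hc : G.Colorable 2) (hab : G.Adj a b) (hw : G.Reachable w a) :
    G.dist w a ≠ G.dist w b := by
  obtain ⟨c⟩ := hc
  let c' : G.Coloring Bool := SimpleGraph.recolorOfEquiv G finTwoEquiv c
  obtain ⟨p, hp⟩ := hw.exists_walk_length_eq_dist
  obtain ⟨q, hq⟩ := (hw.trans hab.reachable).exists_walk_length_eq_dist
  have hpa : Even (G.dist w a) ↔ (c' w ↔ c' a) := hp ▸ c'.even_length_iff_congr p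
  have hqb : Even (G.dist w b) ↔ (c' w ↔ c' b) := hq ▸ c'.even_length_iff_congr q
  intro h
  rw [h, hqb] at hpa
  exact c'.valid hab (by revert hpa; cases c' w <;> cases c' a <;> cases c' b <;> simp)

theorem compl_semicube (hconn : G.Connected) (hc : G.Colorable 2) (hab : G.Adj a b) :
    (semicube G a b)ᶜ = semicube G b a := by
  ext w
  have hne := dist_ne_dist_of_adj hc hab (hconn.preconnected w a)
  have := hab.diff_dist_adj (u := w)
  simp only [semicube, Set.mem_compl_iff, Set.mem_ofPred_eq]
  omega

theorem self_mem_semicube (hab : G.Adj a b) : a ∈ semicube G a b := by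
  simp [semicube, SimpleGraph.dist_eq_one_iff_adj.mpr hab]

theorem semicube_subset_semicube (hconn : G.Connected) (hc : G.Colorable 2)
    (hcvx : GraphConvex G (semicube G a b)) (hxy : G.Adj x y)
    (hx : x ∈ semicube G a b) (hy : y ∉ semicube G a b) :
    semicube G a b ⊆ semicube G x y := by
  intro w hw
  by_contra hwxy
  have hne := dist_ne_dist_of_adj hc hxy (hconn.preconnected w x)
  have := hxy.diff_dist_adj (u := w)
  have hyx := SimpleGraph.dist_eq_one_iff_adj.mpr hxy.symm
  simp only [semicube, Set.mem_ofPred_eq] at hwxy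
  exact hy (hcvx w hw x hx y (by omega))

theorem semicube_eq_semicube (hconn : G.Connected) (hc : G.Colorable 2)
    (hcvx : ∀ a b : V, G.Adj a b → GraphConvex G (semicube G a b)) (hab : G.Adj a b)
    (hxy : G.Adj x y) (hx : x ∈ semicube G a b) (hy : y ∉ semicube G a b) :
    semicube G a b = semicube G x y := by
  have hsub := semicube_subset_semicube hconn hc (hcvx a b hab) hxy hx hy
  refine hsub.antisymm (semicube_subset_semicube hconn hc (hcvx x y hxy) hab
    (hsub (self_mem_semicube hab)) ?_)
  have hy' : y ∈ semicube G b a := by rwa [← compl_semicube hconn hc hab]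
  have hx' : x ∉ semicube G b a := by
    rwa [← compl_semicube hconn hc hab, Set.mem_compl_iff, not_not]
  have hb := semicube_subset_semicube hconn hc (hcvx b a hab.symm) hxy.symm hy' hx'
    (self_mem_semicube hab.symm)
  rwa [← compl_semicube hconn hc hxy] at hb

end Djokovic

section Semicubes

variable {V : Type} {G : SimpleGraph V} {u v x : V}

def semicubes (G : SimpleGraph V) : Set (Set V) :=
  {S | ∃ a b, G.Adj a b ∧ semicube G a b = S}

def separatingSemicubes (G : SimpleGraph V) (u v : V) : Set (Set V) :=
  {S ∈ semicubes G | u ∈ S ∧ v ∉ S}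

theorem compl_mem_semicubes (hconn : G.Connected) (hc : G.Colorable 2) {S : Set V}
    (hS : S ∈ semicubes G) : Sᶜ ∈ semicubes G := by
  obtain ⟨a, b, hab, rfl⟩ := hS
  exact ⟨b, a, hab.symm, (compl_semicube hconn hc hab).symm⟩

theorem separatingSemicubes_eq_insert (hconn : G.Connected) (hc : G.Colorable 2)
    (hcvx : ∀ a b : V, G.Adj a b → GraphConvex G (semicube G a b)) (hux : G.Adj u x)
    (hxv : G.dist x v + 1 = G.dist u v) :
    separatingSemicubes G u v = insert (semicube G u x) (separatingSemicubes G x v) := by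
  have hv : v ∈ semicube G x u := by
    simp only [semicube, Set.mem_ofPred_eq, SimpleGraph.dist_comm (u := v)]
    omega
  ext S
  constructor
  · rintro ⟨⟨a, b, hab, rfl⟩, huS, hvS⟩
    by_cases hxS : x ∈ semicube G a b
    · exact Or.inr ⟨⟨a, b, hab, rfl⟩, hxS, hvS⟩
    · exact Or.inl (semicube_eq_semicube hconn hc hcvx hab hux huS hxS)
  · rintro (rfl | ⟨⟨a, b, hab, rfl⟩, hxS, hvS⟩)
    · refine ⟨⟨u, x, hux, rfl⟩, self_mem_semicube hux, ?_⟩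
      rwa [← compl_semicube hconn hc hux.symm, Set.mem_compl_iff, not_not]
    · refine ⟨⟨a, b, hab, rfl⟩, ?_, hvS⟩
      by_contra huS
      exact hvS (semicube_eq_semicube hconn hc hcvx hab hux.symm hxS huS ▸ hv)

theorem encard_separatingSemicubes (hconn : G.Connected) (hc : G.Colorable 2)
    (hcvx : ∀ a b : V, G.Adj a b → GraphConvex G (semicube G a b)) (u v : V) :
    (separatingSemicubes G u v).encard = G.dist u v := by
  induction hn : G.dist u v generalizing u with
  | zero =>
    obtain rfl := hconn.dist_eq_zero_iff.mp hn
    simp [separatingSemicubes]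
  | succ n ih =>
    obtain ⟨p, hp⟩ := hconn.exists_walk_length_eq_dist u v
    cases p with
    | nil => simp at hn
    | @cons _ x _ hux q =>
      have hxv : G.dist x v = n := by
        have := SimpleGraph.dist_le q
        have := hconn.dist_triangle (u := u) (v := x) (w := v)
        rw [SimpleGraph.dist_eq_one_iff_adj.mpr hux] at this
        rw [SimpleGraph.Walk.length_cons] at hp
        omega
      have hx : semicube G u x ∉ separatingSemicubes G x v := fun h => by
        simpa [semicube] using h.2.1
      rw [separatingSemicubes_eq_insert hconn hc hcvx hux (by omega),
        Set.encard_insert_of_notMem hx, ih x hxv]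
      rfl

theorem isPartialCube_of_semicubes_convex (hconn : G.Connected) (hc : G.Colorable 2)
    (hcvx : ∀ a b : V, G.Adj a b → GraphConvex G (semicube G a b)) : IsPartialCube G := by
  obtain ⟨z⟩ := hconn.nonempty
  refine ⟨hconn, Set V, fun w => separatingSemicubes G w z,
    fun w => Set.finite_of_encard_eq_coe (encard_separatingSemicubes hconn hc hcvx w z),
    fun u v => ?_⟩
  calc _ = (separatingSemicubes G u v).ncard :=
        Set.ncard_symmDiff_separating_eq (fun _ => compl_mem_semicubes hconn hc) u v z
    _ = G.dist u v := by
        rw [Set.ncard_def, encard_separatingSemicubes hconn hc hcvx, ENat.toNat_natCast]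

end Semicubes

/-- A connected graph is a partial cube if and only if it is bipartite and all
of its semicubes are convex. -/
theorem partialCube_iff_bipartite_and_semicubes_convex {V : Type}
    (G : SimpleGraph V) (hconn : G.Connected) :
    IsPartialCube G ↔
      G.Colorable 2 ∧ ∀ a b : V, G.Adj a b → GraphConvex G (semicube G a b) := by
  constructor
  · rintro ⟨-, X, f, hfin, hf⟩
    exact ⟨colorable_two_of_isometry hfin hf,
      fun _ _ hab => graphConvex_semicube_of_isometry hfin hf hab⟩
  · rintro ⟨hc, hcvx⟩
    exact isPartialCube_of_semicubes_convex hconn hc hcvx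
end

section
/- Let ab be an edge of a connected bipartite graph G such that both semicubes W_ab and W_ba are convex. Then the set F_ab of edges joining W_ab to W_ba is a perfect matching between U_ab and U_ba, and it induces a graph isomorphism between the subgraphs induced by U_ab and U_ba. -/
/-- `U_ab`: the vertices of the semicube `W_ab` adjacent to some vertex of the
opposite semicube `W_ba`. -/
def Uset {V : Type} (G : SimpleGraph V) (a b : V) : Set V :=
  {w ∈ semicube G a b | ∃ z ∈ semicube G b a, G.Adj w z}

namespace SimpleGraph

variable {V : Type*} {G : SimpleGraph V}

theorem Colorable.even_dist_iff_even_length (hG : G.Colorable 2) {u v : V} (p : G.Walk u v) :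
    Even (G.dist u v) ↔ Even p.length := by
  obtain ⟨c⟩ := hG
  let c' : G.Coloring Bool := G.recolorOfEquiv finTwoEquiv c
  obtain ⟨q, hq⟩ := p.reachable.exists_walk_length_eq_dist
  rw [← hq, c'.even_length_iff_congr q, c'.even_length_iff_congr p]

theorem exists_bijOn_of_unique_adj {s t : Set V}
    (hst : ∀ u ∈ s, ∀ z ∈ t, ∀ z' ∈ t, G.Adj u z → G.Adj u z' → z = z')
    (hts : ∀ z ∈ t, ∀ u ∈ s, ∀ u' ∈ s, G.Adj z u → G.Adj z u' → u = u') :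
    ∃ φ : V → V, Set.BijOn φ {u ∈ s | ∃ z ∈ t, G.Adj u z} {z ∈ t | ∃ u ∈ s, G.Adj z u} ∧
      ∀ u ∈ {u ∈ s | ∃ z ∈ t, G.Adj u z}, G.Adj u (φ u) := by
  have hchoice : ∀ u, ∃ z, u ∈ {u ∈ s | ∃ z ∈ t, G.Adj u z} → z ∈ t ∧ G.Adj u z := by
    intro u
    by_cases h : ∃ z ∈ t, G.Adj u z
    · obtain ⟨z, hz⟩ := h
      exact ⟨z, fun _ => hz⟩
    · exact ⟨u, fun hu => (h hu.2).elim⟩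
  choose φ hφ using hchoice
  refine ⟨φ, ⟨?maps, ?inj, ?surj⟩, fun u hu => (hφ u hu).2⟩
  case maps => exact fun u hu => ⟨(hφ u hu).1, u, hu.1, (hφ u hu).2.symm⟩
  case inj =>
    intro u hu u' hu' he
    exact hts (φ u) (hφ u hu).1 u hu.1 u' hu'.1 (hφ u hu).2.symm (he ▸ (hφ u' hu').2.symm)
  case surj =>
    rintro z ⟨hz, u, hu, hzu⟩
    have hU : u ∈ {u ∈ s | ∃ z ∈ t, G.Adj u z} := ⟨hu, z, hz, hzu.symm⟩
    exact ⟨u, hU, hst u hu _ (hφ u hU).1 z hz (hφ u hU).2 hzu.symm⟩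

end SimpleGraph

open SimpleGraph

theorem semicube_disjoint {V : Type} (G : SimpleGraph V) (a b : V) :
    Disjoint (semicube G a b) (semicube G b a) :=
  Set.disjoint_left.mpr fun _ h h' => lt_asymm (α := ℕ) h h'

section GraphConvex

variable {V : Type} {G : SimpleGraph V} {S : Set V}

theorem GraphConvex.eq_of_adj_of_adj (hS : GraphConvex G S) (hG : G.Colorable 2) {u z z' : V}
    (hu : u ∉ S) (hz : z ∈ S) (hz' : z' ∈ S) (huz : G.Adj u z) (huz' : G.Adj u z') :
    z = z' := by
  let p : G.Walk z z' := .cons huz.symm huz'.toWalk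
  have hle : G.dist z z' ≤ 2 := G.dist_le p
  have heven : Even (G.dist z z') := (hG.even_dist_iff_even_length p).mpr (by simp [p])
  have hne2 : G.dist z z' ≠ 2 := fun h2 => hu <| hS z hz z' hz' u <| by
    rw [dist_eq_one_iff_adj.mpr huz.symm, dist_eq_one_iff_adj.mpr huz', h2]
  have h0 : G.dist z z' = 0 := by
    obtain ⟨k, hk⟩ := heven
    omega
  exact p.reachable.dist_eq_zero_iff.mp h0

theorem GraphConvex.adj_of_adj_of_adj (hS : GraphConvex G S) (hG : G.Colorable 2)
    {u u' z z' : V} (hu : u ∉ S) (hz : z ∈ S) (hz' : z' ∈ S)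
    (huz : G.Adj u z) (hu'z' : G.Adj u' z') (huu' : G.Adj u u') : G.Adj z z' := by
  let q : G.Walk u z' := .cons huu' hu'z'.toWalk
  let p : G.Walk z z' := .cons huz.symm q
  have hle : G.dist z z' ≤ 3 := G.dist_le p
  have hodd : Odd (G.dist z z') := by
    rw [← Nat.not_even_iff_odd, hG.even_dist_iff_even_length p]
    simp [p, q, Nat.even_iff]
  have hne3 : G.dist z z' ≠ 3 := fun h3 => hu <| hS z hz z' hz' u <| by
    have hzu : G.dist z u = 1 := dist_eq_one_iff_adj.mpr huz.symm
    have huz' : G.dist u z' ≤ 2 := G.dist_le q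
    have htri := huz.symm.reachable.dist_triangle_left z'
    omega
  apply dist_eq_one_iff_adj.mp
  obtain ⟨k, hk⟩ := hodd
  omega

end GraphConvex

theorem Fab_matching_and_isomorphism_general {V : Type} (G : SimpleGraph V)
    (hbip : G.Colorable 2) (a b : V)
    (h1 : GraphConvex G (semicube G a b)) (h2 : GraphConvex G (semicube G b a)) :
    (∀ u ∈ semicube G a b, ∀ z ∈ semicube G b a, ∀ z' ∈ semicube G b a,
        G.Adj u z → G.Adj u z' → z = z') ∧
    (∀ z ∈ semicube G b a, ∀ u ∈ semicube G a b, ∀ u' ∈ semicube G a b,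
        G.Adj z u → G.Adj z u' → u = u') ∧
    ∃ φ : V → V, Set.BijOn φ (Uset G a b) (Uset G b a) ∧
      (∀ u ∈ Uset G a b, G.Adj u (φ u)) ∧
      (∀ u ∈ Uset G a b, ∀ u' ∈ Uset G a b, (G.Adj u u' ↔ G.Adj (φ u) (φ u'))) := by
  have hW : ∀ u ∈ semicube G a b, u ∉ semicube G b a :=
    fun _ hu => Set.disjoint_left.mp (semicube_disjoint G a b) hu
  have hW' : ∀ z ∈ semicube G b a, z ∉ semicube G a b :=
    fun _ hz => Set.disjoint_right.mp (semicube_disjoint G a b) hz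
  have uniq_ab : ∀ u ∈ semicube G a b, ∀ z ∈ semicube G b a, ∀ z' ∈ semicube G b a,
      G.Adj u z → G.Adj u z' → z = z' :=
    fun u hu _ hz _ hz' => h2.eq_of_adj_of_adj hbip (hW u hu) hz hz'
  have uniq_ba : ∀ z ∈ semicube G b a, ∀ u ∈ semicube G a b, ∀ u' ∈ semicube G a b,
      G.Adj z u → G.Adj z u' → u = u' :=
    fun z hz _ hu _ hu' => h1.eq_of_adj_of_adj hbip (hW' z hz) hu hu'
  obtain ⟨φ, hbij, hadj⟩ := G.exists_bijOn_of_unique_adj uniq_ab uniq_ba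
  refine ⟨uniq_ab, uniq_ba, φ, hbij, hadj, fun u hu u' hu' => ⟨fun h => ?_, fun h => ?_⟩⟩
  · exact h2.adj_of_adj_of_adj hbip (hW u hu.1) (hbij.mapsTo hu).1 (hbij.mapsTo hu').1
      (hadj u hu) (hadj u' hu') h
  · exact h1.adj_of_adj_of_adj hbip (hW' _ (hbij.mapsTo hu).1) hu.1 hu'.1
      (hadj u hu).symm (hadj u' hu').symm h

/-- Let `ab` be an edge of a connected bipartite graph whose semicubes `W_ab`
and `W_ba` are convex.  Then the set `F_ab` of edges joining `W_ab` to `W_ba`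
is a perfect matching between `U_ab` and `U_ba` (each vertex of `U_ab` has a
unique neighbour in `W_ba` and vice versa), and the induced pairing is a graph
isomorphism between the subgraphs induced by `U_ab` and `U_ba`. -/
theorem Fab_matching_and_isomorphism {V : Type} (G : SimpleGraph V)
    (hconn : G.Connected) (hbip : G.Colorable 2) (a b : V) (hab : G.Adj a b)
    (h1 : GraphConvex G (semicube G a b)) (h2 : GraphConvex G (semicube G b a)) :
    (∀ u ∈ semicube G a b, ∀ z ∈ semicube G b a, ∀ z' ∈ semicube G b a,
        G.Adj u z → G.Adj u z' → z = z') ∧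
    (∀ z ∈ semicube G b a, ∀ u ∈ semicube G a b, ∀ u' ∈ semicube G a b,
        G.Adj z u → G.Adj z u' → u = u') ∧
    ∃ φ : V → V, Set.BijOn φ (Uset G a b) (Uset G b a) ∧
      (∀ u ∈ Uset G a b, G.Adj u (φ u)) ∧
      (∀ u ∈ Uset G a b, ∀ u' ∈ Uset G a b, (G.Adj u u' ↔ G.Adj (φ u) (φ u'))) :=
  Fab_matching_and_isomorphism_general G hbip a b h1 h2
end

section
/- Let F be a well graded family of finite subsets of X with ∩F = ∅ and ∪F = X, and let PQ be an edge of the induced partial cube with P Δ Q = {x}. Then the semicubes W_PQ and W_QP equal {R ∈ F : x ∈ R} and {R ∈ F : x ∉ R} respectively, where W_PQ = {R ∈ F : |R Δ P| < |R Δ Q|}. -/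
open scoped symmDiff

/-! Toggling `x` changes `|R ∆ P|` by one: `R ∆ Q = (R ∆ P) ∆ {x}`, and `x ∈ R ∆ P` exactly when
`x ∉ R`, so `R` is closer to `P` than to `Q` iff `x ∈ R`, and closer to `Q` iff `x ∉ R`. -/

/-- Well gradedness for a family of finite subsets of `X`. -/
def IsWellGraded {X : Type} [DecidableEq X] (F : Set (Finset X)) : Prop :=
  ∀ P ∈ F, ∀ Q ∈ F, P ≠ Q →
    ∃ (n : ℕ) (R : ℕ → Finset X), R 0 = P ∧ R n = Q ∧ (∀ i ≤ n, R i ∈ F) ∧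
      (∀ i < n, ((R i) ∆ (R (i + 1))).card = 1) ∧ n = (P ∆ Q).card

namespace Finset

variable {α : Type*} [DecidableEq α] {s : Finset α} {a : α}

theorem symmDiff_singleton_of_mem (h : a ∈ s) : s ∆ {a} = s.erase a := by
  ext b
  by_cases hb : b = a <;> simp [mem_symmDiff, hb, h]

theorem symmDiff_singleton_of_notMem (h : a ∉ s) : s ∆ {a} = insert a s := by
  ext b
  by_cases hb : b = a <;> simp [mem_symmDiff, hb, h]

theorem card_symmDiff_singleton_lt_iff : #(s ∆ {a}) < #s ↔ a ∈ s := by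
  by_cases h : a ∈ s
  · simpa [symmDiff_singleton_of_mem h, h] using card_erase_lt_of_mem h
  · simp [symmDiff_singleton_of_notMem h, card_insert_of_notMem h, h]

theorem card_lt_card_symmDiff_singleton_iff : #s < #(s ∆ {a}) ↔ a ∉ s := by
  by_cases h : a ∈ s
  · simp [symmDiff_singleton_of_mem h, h]
  · simp [symmDiff_singleton_of_notMem h, card_insert_of_notMem h, h]

end Finset

theorem semicubes_of_wellGraded_family_general {X : Type} [DecidableEq X]
    (F : Set (Finset X)) (P Q : Finset X) (x : X)
    (hPQ : P ∆ Q = {x}) (hxP : x ∈ P) :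
    {R : Finset X | R ∈ F ∧ (R ∆ P).card < (R ∆ Q).card} =
        {R : Finset X | R ∈ F ∧ x ∈ R} ∧
    {R : Finset X | R ∈ F ∧ (R ∆ Q).card < (R ∆ P).card} =
        {R : Finset X | R ∈ F ∧ x ∉ R} := by
  have hQ (R : Finset X) : R ∆ Q = (R ∆ P) ∆ {x} := by
    rw [← hPQ, symmDiff_assoc, symmDiff_symmDiff_cancel_left]
  have hx (R : Finset X) : x ∈ R ∆ P ↔ x ∉ R := by
    simp [Finset.mem_symmDiff, hxP]
  constructor <;> ext R
  · simp [hQ, Finset.card_lt_card_symmDiff_singleton_iff, hx]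
  · simp [hQ, Finset.card_symmDiff_singleton_lt_iff, hx]

/-- Let `F` be a well graded family of finite subsets of `X` with `∩F = ∅` and
`∪F = X`, and let `PQ` be an edge of the induced partial cube with
`P ∆ Q = {x}` (here `x ∈ P`).  Then the semicubes
`W_PQ = {R ∈ F : |R ∆ P| < |R ∆ Q|}` and `W_QP` equal `{R ∈ F : x ∈ R}` and
`{R ∈ F : x ∉ R}` respectively. -/
theorem semicubes_of_wellGraded_family {X : Type} [DecidableEq X]
    (F : Set (Finset X)) (hwg : IsWellGraded F)
    (hinter : ∀ x : X, ∃ P ∈ F, x ∉ P) (hunion : ∀ x : X, ∃ P ∈ F, x ∈ P)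
    (P Q : Finset X) (hP : P ∈ F) (hQ : Q ∈ F) (x : X)
    (hPQ : P ∆ Q = {x}) (hxP : x ∈ P) :
    {R : Finset X | R ∈ F ∧ (R ∆ P).card < (R ∆ Q).card} =
        {R : Finset X | R ∈ F ∧ x ∈ R} ∧
    {R : Finset X | R ∈ F ∧ (R ∆ Q).card < (R ∆ P).card} =
        {R : Finset X | R ∈ F ∧ x ∉ R} :=
  semicubes_of_wellGraded_family_general F P Q x hPQ hxP
end
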